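/- Let (T, F) be a tree with dynamics with H ≥ 1, and let x be an extended end. If x is periodic with minimum period N (i.e., F^N(x) = x as an end and no smaller positive iterate fixes x), then there exists a return chain of x whose return times satisfy n_k = N for all sufficiently large k. -/

import Mathlib

/-! Since `F` commutes with `parent`, a relation `F^[n] (x l) = x (l - H * n)` propagates
down the end. Hence the first return time of `x l` is monotone in `l`; being bounded by the
period `N`, it is eventually constant, equal to some `M`. Then `F^[M]` maps the whole end to
itself, so `M = N` by minimality. A return chain is obtained by climbing from a level `L₀`
beyond which the return time is `N` in steps of `H * N`, and descending below `L₀` by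
following first returns. -/

/-- An extended end of a genealogical tree with levels. -/
def IsEnd {V : Type*} (parent : V → V) (level : V → ℤ) (x : ℤ → V) : Prop :=
  ∀ l : ℤ, level (x l) = l ∧ x (l - 1) = parent (x l)

/-- `F^[n] (x l)` returns to the extended end `x`. -/
def Returns {V : Type*} (F : V → V) (x : ℤ → V) (l : ℤ) (n : ℕ) : Prop :=
  1 ≤ n ∧ ∃ m : ℤ, F^[n] (x l) = x m

/-- `n` is the first return time of `x l` to the extended end `x`. -/
def IsFirstReturnTime {V : Type*} (F : V → V) (x : ℤ → V) (l : ℤ) (n : ℕ) : Prop :=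
  Returns F x l n ∧ ∀ n' : ℕ, Returns F x l n' → n ≤ n'

/-- A return chain `(x (l k))` of the extended end `x`, with return times `(n k)`:
`n k` is the first return time of `x (l k)` and `F^[n k] (x (l k)) = x (l (k-1))`. -/
def IsReturnChain {V : Type*} (F : V → V) (x : ℤ → V) (l : ℤ → ℤ) (n : ℤ → ℕ) : Prop :=
  ∀ k : ℤ, IsFirstReturnTime F x (l k) (n k) ∧ F^[n k] (x (l k)) = x (l (k - 1))

theorem Monotone.exists_forall_ge_eq_of_le {α : Type*} [Preorder α] [Nonempty α] {f : α → ℕ}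
    (hf : Monotone f) {B : ℕ} (hB : ∀ a, f a ≤ B) : ∃ a₀, ∀ a ≥ a₀, f a = f a₀ := by
  have hbdd : BddAbove (Set.range f) := ⟨B, by rintro _ ⟨a, rfl⟩; exact hB a⟩
  obtain ⟨a₀, ha₀⟩ := Nat.sSup_mem (Set.range_nonempty f) hbdd
  refine ⟨a₀, fun a ha => le_antisymm ?_ (hf ha)⟩
  rw [ha₀]
  exact le_csSup hbdd ⟨a, rfl⟩

theorem exists_backward_orbit_extending {α : Type*} (s : α → α) (a : ℕ → α)
    (ha : ∀ k, s (a (k + 1)) = a k) :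
    ∃ l : ℤ → α, (∀ k, s (l k) = l (k - 1)) ∧ ∀ k : ℕ, l k = a k := by
  refine ⟨fun k => k.rec a fun n => s^[n + 1] (a 0), fun k => ?_, fun k => rfl⟩
  rcases k with (_ | j) | n
  · rfl
  · rw [show Int.ofNat (j + 1) - 1 = Int.ofNat j from Int.add_sub_cancel (j : ℤ) 1]
    exact ha j
  · rw [Int.negSucc_sub_one]
    exact (Function.iterate_succ_apply' s (n + 1) (a 0)).symm

/-- Junk value `0` (as `sInf ∅`) when `x l` never returns. -/
noncomputable def firstReturnTime {V : Type*} (F : V → V) (x : ℤ → V) (l : ℤ) : ℕ :=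
  sInf {n | Returns F x l n}

section TreeDynamics

variable {V : Type*} {parent : V → V} {level : V → ℤ} {F : V → V} {H : ℤ} {x : ℤ → V}

theorem isFirstReturnTime_firstReturnTime {l : ℤ} {n : ℕ} (h : Returns F x l n) :
    IsFirstReturnTime F x l (firstReturnTime F x l) :=
  ⟨Nat.sInf_mem (s := {n | Returns F x l n}) ⟨n, h⟩, fun _ hn' => Nat.sInf_le hn'⟩

theorem level_iterate (hFlev : ∀ v, level (F v) = level v - H) (n : ℕ) (v : V) :
    level (F^[n] v) = level v - H * n := by
  induction n generalizing v with
  | zero => simp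
  | succ n ih => rw [Function.iterate_succ_apply, ih, hFlev]; push_cast; ring

theorem IsEnd.eq_sub_of_iterate_eq (hx : IsEnd parent level x)
    (hFlev : ∀ v, level (F v) = level v - H) {l m : ℤ} {n : ℕ} (h : F^[n] (x l) = x m) :
    m = l - H * n := by
  simpa only [h, (hx m).1, (hx l).1] using level_iterate hFlev n (x l)

theorem IsEnd.iterate_apply_of_le (hx : IsEnd parent level x) (hF : Function.Commute F parent)
    {l : ℤ} {n : ℕ} (h : F^[n] (x l) = x (l - H * n)) {l' : ℤ} (hl' : l' ≤ l) :
    F^[n] (x l') = x (l' - H * n) := by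
  induction l', hl' using Int.leInductionDown with
  | base => exact h
  | pred l' _ ih =>
    rw [(hx l').2, hF.iterate_left n, ih, ← (hx _).2]
    ring_nf

theorem IsEnd.iterate_firstReturnTime (hx : IsEnd parent level x)
    (hFlev : ∀ v, level (F v) = level v - H) {l : ℤ} {n : ℕ} (h : Returns F x l n) :
    F^[firstReturnTime F x l] (x l) = x (l - H * firstReturnTime F x l) := by
  obtain ⟨m, hm⟩ := (isFirstReturnTime_firstReturnTime h).1.2
  rwa [← hx.eq_sub_of_iterate_eq hFlev hm]

theorem IsEnd.monotone_firstReturnTime (hx : IsEnd parent level x)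
    (hF : Function.Commute F parent) (hFlev : ∀ v, level (F v) = level v - H)
    (hret : ∀ l, ∃ n, Returns F x l n) : Monotone (firstReturnTime F x) := by
  intro l' l hl
  obtain ⟨n, hn⟩ := hret l
  exact Nat.sInf_le ⟨(isFirstReturnTime_firstReturnTime hn).1.1, _,
    hx.iterate_apply_of_le hF (hx.iterate_firstReturnTime hFlev hn) hl⟩

theorem IsEnd.exists_forall_ge_firstReturnTime_eq (hx : IsEnd parent level x)
    (hF : Function.Commute F parent) (hFlev : ∀ v, level (F v) = level v - H)
    {N : ℕ} (hN : 1 ≤ N) (hper : ∀ l : ℤ, F^[N] (x l) = x (l - H * N))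
    (hmin : ∀ N' : ℕ, 1 ≤ N' → (∀ l : ℤ, F^[N'] (x l) = x (l - H * N')) → N ≤ N') :
    ∃ L₀, ∀ l ≥ L₀, firstReturnTime F x l = N := by
  have hret (l : ℤ) : Returns F x l N := ⟨hN, _, hper l⟩
  have hle (l : ℤ) : firstReturnTime F x l ≤ N := Nat.sInf_le (hret l)
  obtain ⟨L₀, hL₀⟩ := (hx.monotone_firstReturnTime hF hFlev fun l => ⟨N, hret l⟩
    ).exists_forall_ge_eq_of_le hle
  have hfix (l : ℤ) :
      F^[firstReturnTime F x L₀] (x l) = x (l - H * firstReturnTime F x L₀) := by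
    have h := hx.iterate_firstReturnTime hFlev (hret (max l L₀))
    rw [hL₀ _ (le_max_right l L₀)] at h
    exact hx.iterate_apply_of_le hF h (le_max_left l L₀)
  have hpos : 1 ≤ firstReturnTime F x L₀ := (isFirstReturnTime_firstReturnTime (hret L₀)).1.1
  exact ⟨L₀, fun l hl => (hL₀ l hl).trans (le_antisymm (hle L₀) (hmin _ hpos hfix))⟩

end TreeDynamics

theorem stmt_13_general (V : Type*) (parent : V → V) (level : V → ℤ)
    (F : V → V) (hF : ∀ v, F (parent v) = parent (F v))
    (H : ℤ) (hH : 1 ≤ H) (hFlev : ∀ v, level (F v) = level v - H)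
    (x : ℤ → V) (hx : IsEnd parent level x)
    (N : ℕ) (hN : 1 ≤ N)
    (hper : ∀ l : ℤ, F^[N] (x l) = x (l - H * N))
    (hmin : ∀ N' : ℕ, 1 ≤ N' → (∀ l : ℤ, F^[N'] (x l) = x (l - H * N')) → N ≤ N') :
    ∃ (l : ℤ → ℤ) (n : ℤ → ℕ), IsReturnChain F x l n ∧
      ∃ K : ℤ, ∀ k ≥ K, n k = N := by
  obtain ⟨L₀, hL₀⟩ := hx.exists_forall_ge_firstReturnTime_eq hF hFlev hN hper hmin
  set r := firstReturnTime F x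
  have hclimb (k : ℕ) : L₀ ≤ L₀ + k * (H * N) := le_add_of_nonneg_right (by positivity)
  obtain ⟨l, hl, hl_nat⟩ := exists_backward_orbit_extending (fun l => l - H * r l)
    (fun k => L₀ + k * (H * N)) fun k => by
      rw [hL₀ _ (hclimb _)]
      push_cast
      ring
  have hret (m : ℤ) : Returns F x m N := ⟨hN, _, hper m⟩
  refine ⟨l, fun k => r (l k), fun k => ⟨isFirstReturnTime_firstReturnTime (hret _), ?_⟩, 0,
    fun k hk => ?_⟩
  · rw [← hl k]
    exact hx.iterate_firstReturnTime hFlev (hret _)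
  · lift k to ℕ using hk
    simp only [hl_nat]
    exact hL₀ _ (hclimb k)

/-- If the extended end `x` is periodic with minimum period `N`, then
there exists a return chain of `x` whose return times are eventually equal to `N`. -/
theorem stmt_13 (V : Type*) (parent : V → V) (level : V → ℤ)
    (hpl : ∀ v, level (parent v) = level v - 1)
    (F : V → V) (hF : ∀ v, F (parent v) = parent (F v))
    (H : ℤ) (hH : 1 ≤ H) (hFlev : ∀ v, level (F v) = level v - H)
    (x : ℤ → V) (hx : IsEnd parent level x)
    (N : ℕ) (hN : 1 ≤ N)
    (hper : ∀ l : ℤ, F^[N] (x l) = x (l - H * N))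
    (hmin : ∀ N' : ℕ, 1 ≤ N' → (∀ l : ℤ, F^[N'] (x l) = x (l - H * N')) → N ≤ N') :
    ∃ (l : ℤ → ℤ) (n : ℤ → ℕ), IsReturnChain F x l n ∧
      ∃ K : ℤ, ∀ k ≥ K, n k = N :=
  stmt_13_general V parent level F hF H hH hFlev x hx N hN hper hmin
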